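/- Let D ⊂ ℝ² be the closed unit disc, and let x̃₁ = (2/√π)·x₁, x̃₂ = (2/√π)·x₂. For every (a,b) ∈ ℝ² with (a,b) ≠ (0,0), setting φ = a·x̃₁ + b·x̃₂ and Φ = φ² − (1/π)(a²+b²), the quantity Q(a,b) := ( (∫_D x̃₁φ² dx)² + (∫_D x̃₂φ² dx)² + 4(∫_D φ² dx)²/Area(D) ) / ∫_D Φ² dx equals 4; hence 8/3 + (2/3)·Q(a,b) = 16/3 for all (a,b) ≠ (0,0). -/

import Mathlib

open MeasureTheory

/-!
In polar coordinates `a x + b y = √(a² + b²) · r cos (θ - arg (a + b i))`, so by periodicity the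
disc moments `∫_D (a x + b y)ⁿ` are `(a² + b²)^(n/2) / (n + 2)` times `∫_{-π}^{π} cosⁿ θ`. With
`ρ = a² + b²` this gives `∫_D φ² = ρ` and `∫_D Φ² = ρ² / π`, while `x̃ᵢ φ²` is odd and `D` is
symmetric, so the two cubic moments vanish. Hence `Q = (4 ρ² / π) / (ρ² / π) = 4`.
-/

open Real Set intervalIntegral

theorem setIntegral_eq_zero_of_odd {G E : Type*} [MeasurableSpace G] [AddGroup G] [MeasurableNeg G]
    [NormedAddCommGroup E] [NormedSpace ℝ E] {μ : Measure G} [μ.IsNegInvariant] {s : Set G}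
    (hs : MeasurableSet s) (hs_neg : ∀ x, -x ∈ s ↔ x ∈ s) {f : G → E} (hf : f.Odd) :
    ∫ x in s, f x ∂μ = 0 := by
  have hodd : ∀ x, s.indicator f (-x) = -s.indicator f x := by
    intro x
    by_cases hx : x ∈ s <;> simp [indicator, hs_neg, hx, hf x]
  have h := integral_neg_eq_self (s.indicator f) μ
  simp_rw [hodd, MeasureTheory.integral_neg, MeasureTheory.integral_indicator hs] at h
  have htwice : (2 : ℝ) • ∫ x in s, f x ∂μ = 0 := by
    rw [two_smul]
    nth_rw 1 [← h]
    exact neg_add_cancel _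
  exact (smul_eq_zero.mp htwice).resolve_left two_ne_zero

def unitDisc : Set (ℝ × ℝ) := {p | p.1 ^ 2 + p.2 ^ 2 ≤ 1}

@[simp]
theorem mem_unitDisc {p : ℝ × ℝ} : p ∈ unitDisc ↔ p.1 ^ 2 + p.2 ^ 2 ≤ 1 := Iff.rfl

theorem neg_mem_unitDisc (p : ℝ × ℝ) : -p ∈ unitDisc ↔ p ∈ unitDisc := by
  simp

theorem isClosed_unitDisc : IsClosed unitDisc :=
  isClosed_le (f := fun p : ℝ × ℝ => p.1 ^ 2 + p.2 ^ 2) (by fun_prop) continuous_const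

theorem measurableSet_unitDisc : MeasurableSet unitDisc := isClosed_unitDisc.measurableSet

theorem isCompact_unitDisc : IsCompact unitDisc := by
  refine (isCompact_Icc (a := -1) (b := 1)).prod (isCompact_Icc (a := -1) (b := 1))
    |>.of_isClosed_subset isClosed_unitDisc fun p hp => ?_
  rw [mem_unitDisc] at hp
  simp only [mem_prod, mem_Icc]
  refine ⟨⟨?_, ?_⟩, ?_, ?_⟩ <;> nlinarith [sq_nonneg p.1, sq_nonneg p.2]

theorem setIntegral_unitDisc_eq_polar {g : ℝ × ℝ → ℝ} (hg : Continuous g) :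
    ∫ p in unitDisc, g p = ∫ r in (0 : ℝ)..1, ∫ θ in -π..π, r * g (r * cos θ, r * sin θ) := by
  set F : ℝ × ℝ → ℝ := fun q => q.1 * g (q.1 * cos q.2, q.1 * sin q.2)
  set S : Set (ℝ × ℝ) := {q | q.1 ^ 2 ≤ 1}
  have hpolar : ∀ q : ℝ × ℝ, q.1 • unitDisc.indicator g (polarCoord.symm q) = S.indicator F q := by
    rintro ⟨r, θ⟩
    have hr : (r * cos θ) ^ 2 + (r * sin θ) ^ 2 = r ^ 2 := by
      linear_combination r ^ 2 * sin_sq_add_cos_sq θ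
    by_cases h : r ^ 2 ≤ 1
    · rw [indicator_of_mem (by simpa [hr] using h), indicator_of_mem (show (r, θ) ∈ S from h)]
      simp [F]
    · rw [indicator_of_notMem (by simpa [hr] using h),
        indicator_of_notMem (show (r, θ) ∉ S from h), smul_zero]
  have hdomain : polarCoord.target ∩ S = Ioc 0 1 ×ˢ Ioo (-π) π := by
    ext ⟨r, θ⟩
    simp only [polarCoord_target, mem_inter_iff, mem_prod, mem_Ioi, S, mem_ofPred_eq, mem_Ioc]
    constructor
    · rintro ⟨⟨hr, hθ⟩, h⟩
      exact ⟨⟨hr, by nlinarith⟩, hθ⟩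
    · rintro ⟨⟨hr, h⟩, hθ⟩
      exact ⟨⟨hr, hθ⟩, by nlinarith⟩
  have hF : IntegrableOn F (Ioc 0 1 ×ˢ Ioo (-π) π) (volume.prod volume) :=
    ((by fun_prop : Continuous F).continuousOn.integrableOn_compact
      (isCompact_Icc.prod isCompact_Icc)).mono_set
      (prod_mono Ioc_subset_Icc_self Ioo_subset_Icc_self)
  rw [← MeasureTheory.integral_indicator measurableSet_unitDisc, ← integral_comp_polarCoord_symm]
  simp_rw [hpolar]
  rw [setIntegral_indicator (isClosed_le (by fun_prop) continuous_const).measurableSet, hdomain,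
    Measure.volume_eq_prod, setIntegral_prod F hF, integral_of_le zero_le_one]
  refine setIntegral_congr_fun measurableSet_Ioc fun r _ => ?_
  rw [integral_of_le (by linarith [pi_pos]), integral_Ioc_eq_integral_Ioo]

theorem integral_mul_cos_add_mul_sin_pow (a b : ℝ) (n : ℕ) :
    ∫ θ in -π..π, (a * cos θ + b * sin θ) ^ n = √(a ^ 2 + b ^ 2) ^ n * ∫ θ in -π..π, cos θ ^ n := by
  set z : ℂ := ⟨a, b⟩
  have hshift : ∀ θ, a * cos θ + b * sin θ = ‖z‖ * cos (θ - z.arg) := fun θ => by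
    linear_combination (-cos θ) * Complex.norm_mul_cos_arg z - sin θ * Complex.norm_mul_sin_arg z
      - ‖z‖ * cos_sub θ z.arg
  have hnorm : ‖z‖ = √(a ^ 2 + b ^ 2) := by
    rw [Complex.norm_eq_sqrt_sq_add_sq]
  have hper : Function.Periodic (fun θ => cos θ ^ n) (2 * π) := fun θ => by simp [cos_add_two_pi]
  simp_rw [hshift, mul_pow, intervalIntegral.integral_const_mul, hnorm,
    integral_comp_sub_right (fun θ => cos θ ^ n)]
  congr 1
  convert hper.intervalIntegral_add_eq (-π - z.arg) (-π) using 2 <;> ring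

theorem setIntegral_unitDisc_linear_pow (a b : ℝ) (n : ℕ) :
    ∫ p in unitDisc, (a * p.1 + b * p.2) ^ n
      = √(a ^ 2 + b ^ 2) ^ n / (n + 2) * ∫ θ in -π..π, cos θ ^ n := by
  have hsep : ∀ r θ, r * (a * (r * cos θ) + b * (r * sin θ)) ^ n
      = r ^ (n + 1) * (a * cos θ + b * sin θ) ^ n := fun r θ => by
    rw [show a * (r * cos θ) + b * (r * sin θ) = r * (a * cos θ + b * sin θ) by ring, mul_pow]
    ring
  have hcont : Continuous fun p : ℝ × ℝ => (a * p.1 + b * p.2) ^ n := by fun_prop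
  simp_rw [setIntegral_unitDisc_eq_polar hcont, hsep, intervalIntegral.integral_const_mul,
    integral_mul_cos_add_mul_sin_pow, intervalIntegral.integral_mul_const, integral_pow]
  push_cast
  field_simp
  ring

theorem volume_real_unitDisc : volume.real unitDisc = π := by
  have h := setIntegral_unitDisc_linear_pow 0 0 0
  simp only [pow_zero, setIntegral_const, smul_eq_mul, mul_one, integral_one] at h
  rw [h]
  push_cast
  ring

theorem setIntegral_unitDisc_linear_sq (a b : ℝ) :
    ∫ p in unitDisc, (a * p.1 + b * p.2) ^ 2 = π / 4 * (a ^ 2 + b ^ 2) := by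
  rw [setIntegral_unitDisc_linear_pow, sq_sqrt (by positivity), integral_cos_sq]
  simp only [cos_pi, sin_pi, cos_neg, sin_neg]
  push_cast
  ring

theorem setIntegral_unitDisc_linear_pow_four (a b : ℝ) :
    ∫ p in unitDisc, (a * p.1 + b * p.2) ^ 4 = π / 8 * (a ^ 2 + b ^ 2) ^ 2 := by
  rw [setIntegral_unitDisc_linear_pow, integral_cos_pow 2, integral_cos_sq,
    show √(a ^ 2 + b ^ 2) ^ 4 = (√(a ^ 2 + b ^ 2) ^ 2) ^ 2 by ring, sq_sqrt (by positivity)]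
  simp only [cos_pi, sin_pi, cos_neg, sin_neg]
  push_cast
  ring

theorem setIntegral_unitDisc_linear_sq_sub_const_sq (a b c : ℝ) :
    ∫ p in unitDisc, ((a * p.1 + b * p.2) ^ 2 - c) ^ 2
      = π / 8 * (a ^ 2 + b ^ 2) ^ 2 - π / 2 * c * (a ^ 2 + b ^ 2) + π * c ^ 2 := by
  have hint : ∀ n : ℕ, IntegrableOn (fun p : ℝ × ℝ => (a * p.1 + b * p.2) ^ n) unitDisc :=
    fun n => (by fun_prop : Continuous _).continuousOn.integrableOn_compact isCompact_unitDisc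
  have hexpand : ∀ p : ℝ × ℝ, ((a * p.1 + b * p.2) ^ 2 - c) ^ 2
      = (a * p.1 + b * p.2) ^ 4 - 2 * c * (a * p.1 + b * p.2) ^ 2 + c ^ 2 := fun p => by ring
  simp_rw [hexpand]
  have h2 : IntegrableOn (fun p : ℝ × ℝ => 2 * c * (a * p.1 + b * p.2) ^ 2) unitDisc :=
    (hint 2).const_mul _
  have h42 : IntegrableOn
      (fun p : ℝ × ℝ => (a * p.1 + b * p.2) ^ 4 - 2 * c * (a * p.1 + b * p.2) ^ 2) unitDisc :=
    (hint 4).sub h2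
  rw [integral_add h42 (integrableOn_const isCompact_unitDisc.measure_lt_top.ne),
    integral_sub (hint 4) h2, MeasureTheory.integral_const_mul,
    setIntegral_unitDisc_linear_pow_four, setIntegral_unitDisc_linear_sq, setIntegral_const,
    volume_real_unitDisc, smul_eq_mul]
  ring

/-- The unit-disc computation from Section 5: the quantity `Q(a,b)` of Theorem 1.1,
computed for the closed unit disc `D`, equals `4` for every `(a,b) ≠ (0,0)`, hence
`8/3 + (2/3)·Q(a,b) = 16/3`. -/
theorem stmt_18 (D : Set (ℝ × ℝ))
    (hD : D = {p : ℝ × ℝ | p.1 ^ 2 + p.2 ^ 2 ≤ 1})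
    (x1 x2 : ℝ × ℝ → ℝ)
    (hx1 : x1 = fun p => 2 / Real.sqrt Real.pi * p.1)
    (hx2 : x2 = fun p => 2 / Real.sqrt Real.pi * p.2)
    (Q : ℝ → ℝ → ℝ)
    (hQ : ∀ a b : ℝ, Q a b =
      ((∫ p in D, x1 p * (a * x1 p + b * x2 p) ^ 2) ^ 2 +
         (∫ p in D, x2 p * (a * x1 p + b * x2 p) ^ 2) ^ 2 +
         4 * (∫ p in D, (a * x1 p + b * x2 p) ^ 2) ^ 2 / (volume D).toReal) /
        ∫ p in D, ((a * x1 p + b * x2 p) ^ 2 - 1 / Real.pi * (a ^ 2 + b ^ 2)) ^ 2) :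
    ∀ a b : ℝ, ¬(a = 0 ∧ b = 0) →
      Q a b = 4 ∧ 8 / 3 + 2 / 3 * Q a b = (16 : ℝ) / 3 := by
  intro a b hab
  have hDisc : D = unitDisc := hD
  set s := 2 / √π
  have hφ : ∀ p : ℝ × ℝ, a * x1 p + b * x2 p = a * s * p.1 + b * s * p.2 := fun p => by
    rw [hx1, hx2]; ring
  have hscale : (a * s) ^ 2 + (b * s) ^ 2 = 4 / π * (a ^ 2 + b ^ 2) := by
    rw [mul_pow, mul_pow, div_pow, sq_sqrt pi_pos.le]; ring
  have hρ : 0 < a ^ 2 + b ^ 2 := by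
    rcases not_and_or.mp hab with ha | hb <;> positivity
  have hodd₁ : ∫ p in D, x1 p * (a * x1 p + b * x2 p) ^ 2 = 0 :=
    hDisc ▸ setIntegral_eq_zero_of_odd measurableSet_unitDisc neg_mem_unitDisc
      fun p => by simp only [hx1, hx2, Prod.fst_neg, Prod.snd_neg]; ring
  have hodd₂ : ∫ p in D, x2 p * (a * x1 p + b * x2 p) ^ 2 = 0 :=
    hDisc ▸ setIntegral_eq_zero_of_odd measurableSet_unitDisc neg_mem_unitDisc
      fun p => by simp only [hx1, hx2, Prod.fst_neg, Prod.snd_neg]; ring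
  have hsq : ∫ p in D, (a * x1 p + b * x2 p) ^ 2 = a ^ 2 + b ^ 2 := by
    simp_rw [hDisc, hφ, setIntegral_unitDisc_linear_sq, hscale]
    field_simp
  have hvar : ∫ p in D, ((a * x1 p + b * x2 p) ^ 2 - 1 / π * (a ^ 2 + b ^ 2)) ^ 2
      = (a ^ 2 + b ^ 2) ^ 2 / π := by
    simp_rw [hDisc, hφ, setIntegral_unitDisc_linear_sq_sub_const_sq, hscale]
    field_simp
    ring
  have hvol : (volume D).toReal = π := by
    rw [hDisc, ← measureReal_def, volume_real_unitDisc]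
  have hQ4 : Q a b = 4 := by
    rw [hQ, hodd₁, hodd₂, hsq, hvar, hvol]
    field_simp
    ring
  exact ⟨hQ4, by rw [hQ4]; norm_num⟩
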